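/- Two Bessel multiwindow Gabor systems G(g,L,M,N) and G(h,L,M,N) in ℓ²(S) are dual frames if and only if (a) for all j ∈ S ∩ {0,...,N−1}, ∑_{l=0}^{L-1} ∑_{n∈ℤ} h_l(j−nN)·conj(g_l(j−nN)) = 1/M, and (b) for all j ∈ S ∩ {0,...,N−1} and all k ∈ ℤ∖{0}, ∑_{l=0}^{L-1} ∑_{n∈ℤ} h_l(j−nN)·conj(g_l(j+kM−nN)) = 0. -/

import Mathlib

open Complex MeasureTheory

noncomputable section

/-- The ℓ² "inner product" ⟨f,g⟩ = ∑_{j∈ℤ} f(j)·conj(g(j)). -/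
def dotP (f g : ℤ → ℂ) : ℂ := ∑' j : ℤ, f j * (starRingEnd ℂ) (g j)

/-- Squared ℓ² norm. -/
def normSq2 (f : ℤ → ℂ) : ℝ := ∑' j : ℤ, ‖f j‖ ^ 2

/-- Membership in ℓ²(S): square-summable and vanishing off S. -/
def MemL2S (S : Set ℤ) (f : ℤ → ℂ) : Prop := Memℓp f 2 ∧ ∀ j ∉ S, f j = 0

/-- S ⊆ ℤ is an Nℤ-periodic (nonempty) set. -/
def IsPeriodicSet (N : ℕ) (S : Set ℤ) : Prop :=
  S.Nonempty ∧ ∀ j ∈ S, ∀ n : ℤ, j + n * (N : ℤ) ∈ S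

/-- The multiwindow Gabor family {E_{m/M}T_{nN} g_l}. -/
def gaborFam (L M N : ℕ) (g : ℕ → ℤ → ℂ) : Fin L × ℤ × Fin M → ℤ → ℂ :=
  fun p j =>
    Complex.exp (2 * (Real.pi : ℂ) * Complex.I * ((p.2.2 : ℕ) : ℂ) * (j : ℂ) / (M : ℂ)) *
      g p.1 (j - p.2.1 * (N : ℤ))

/-- Frame for ℓ²(S) with bounds A, B. -/
def IsFrameOn {ι : Type*} (S : Set ℤ) (F : ι → ℤ → ℂ) (A B : ℝ) : Prop :=
  ∀ f : ℤ → ℂ, MemL2S S f →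
    A * normSq2 f ≤ ∑' i, ‖dotP f (F i)‖ ^ 2 ∧
      ∑' i, ‖dotP f (F i)‖ ^ 2 ≤ B * normSq2 f

/-- Bessel sequence in ℓ²(S). -/
def IsBesselOn {ι : Type*} (S : Set ℤ) (F : ι → ℤ → ℂ) : Prop :=
  ∃ B : ℝ, 0 < B ∧ ∀ f : ℤ → ℂ, MemL2S S f →
    ∑' i, ‖dotP f (F i)‖ ^ 2 ≤ B * normSq2 f

/-- Exact frame (Riesz basis): a frame that ceases to be a frame upon
removing any single element. -/
def IsExactFrameOn {ι : Type*} (S : Set ℤ) (F : ι → ℤ → ℂ) : Prop :=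
  (∃ A B : ℝ, 0 < A ∧ A ≤ B ∧ IsFrameOn S F A B) ∧
  ∀ i₀ : ι, ¬ ∃ A B : ℝ, 0 < A ∧ A ≤ B ∧
      IsFrameOn S (fun i : {i // i ≠ i₀} => F (i : ι)) A B

/-- Orthonormal basis: orthonormal family that is a Parseval frame. -/
def IsONBOn {ι : Type*} [DecidableEq ι] (S : Set ℤ) (F : ι → ℤ → ℂ) : Prop :=
  (∀ i i' : ι, dotP (F i) (F i') = if i = i' then 1 else 0) ∧ IsFrameOn S F 1 1

/-- The matrix entry (M_φ(j)M_ψ*(j))_{0,k} = ∑_n φ(j−nN)·conj(ψ(j+kM−nN)). -/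
def matEntry (M N : ℕ) (φ ψ : ℤ → ℂ) (j k : ℤ) : ℂ :=
  ∑' n : ℤ, φ (j - n * (N : ℤ)) * (starRingEnd ℂ) (ψ (j + k * (M : ℤ) - n * (N : ℤ)))

/-- The discrete Zak transform z_M g (j, θ) = ∑_k g(j+kM) e^{2πikθ}. -/
def zak (M : ℕ) (g : ℤ → ℂ) (j : ℤ) (θ : ℝ) : ℂ :=
  ∑' k : ℤ, g (j + k * (M : ℤ)) *
    Complex.exp (2 * (Real.pi : ℂ) * Complex.I * (k : ℂ) * (θ : ℂ))

end

/-!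
Testing the reconstruction formula on `f = δ_{j₀}` shows that it forces the kernel identity
`∑ᵢ conj (gᵢ j₀) * hᵢ j = δ_{j₀} j` for `j₀ ∈ S`. Conversely, the kernel identity gives the
formula for finitely supported `f`, and the Bessel bound of `g` extends it to all of `ℓ²(S)`,
since the tails of `f` contribute at most `√(B ‖f - 1_s f‖²) · ‖(hᵢ j)ᵢ‖`.

For Gabor systems the sum over the modulations `m < M` is a character sum, so the kernel vanishes
unless `j₀ = j + kM`, where it is `M` times `∑_l matEntry M N (h l) (g l) j k`. This quantity is
`N`-periodic in `j` and vanishes unless both `j` and `j + kM` lie in `S`, which reduces the kernel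
identity to the conditions on `S ∩ [0, N)`.
-/

open Filter Topology
open scoped ComplexConjugate

section SquareSummable

variable {ι : Type*}

theorem summable_mul_and_norm_tsum_mul_le {a b : ι → ℂ} (ha : Summable fun i => ‖a i‖ ^ 2)
    (hb : Summable fun i => ‖b i‖ ^ 2) :
    Summable (fun i => a i * b i) ∧
      ‖∑' i, a i * b i‖ ≤ √(∑' i, ‖a i‖ ^ 2) * √(∑' i, ‖b i‖ ^ 2) := by
  obtain ⟨hsum, hle⟩ := Real.summable_and_inner_le_Lp_mul_Lq_tsum_of_nonneg
    Real.HolderConjugate.two_two (fun i => norm_nonneg (a i)) (fun i => norm_nonneg (b i))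
    (by simpa only [Real.rpow_two] using ha) (by simpa only [Real.rpow_two] using hb)
  simp only [Real.rpow_two, ← Real.sqrt_eq_rpow] at hle
  have hnorm : Summable fun i => ‖a i * b i‖ := by simpa only [norm_mul] using hsum
  refine ⟨hnorm.of_norm, (norm_tsum_le_tsum_norm hnorm).trans ?_⟩
  simpa only [norm_mul] using hle

theorem summable_mul_of_summable_sq {a b : ι → ℂ} (ha : Summable fun i => ‖a i‖ ^ 2)
    (hb : Summable fun i => ‖b i‖ ^ 2) : Summable fun i => a i * b i :=
  (summable_mul_and_norm_tsum_mul_le ha hb).1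

theorem summable_sq_conj {a : ι → ℂ} (ha : Summable fun i => ‖a i‖ ^ 2) :
    Summable fun i => ‖conj (a i)‖ ^ 2 := by
  simpa only [RCLike.norm_conj] using ha

theorem memℓp_two_iff {a : ι → ℂ} : Memℓp a 2 ↔ Summable fun i => ‖a i‖ ^ 2 := by
  rw [memℓp_gen_iff (by norm_num)]
  norm_num [Real.rpow_two]

end SquareSummable

section L2

variable {S : Set ℤ} {f φ : ℤ → ℂ}

theorem MemL2S.summable_sq (hf : MemL2S S f) : Summable fun j => ‖f j‖ ^ 2 :=
  memℓp_two_iff.mp hf.1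

theorem MemL2S.indicator (hf : MemL2S S f) (s : Set ℤ) : MemL2S S (s.indicator f) := by
  refine ⟨memℓp_two_iff.mpr (hf.summable_sq.of_nonneg_of_le (fun _ => by positivity)
    fun j => ?_), fun j hj => by simp [hf.2 j hj]⟩
  rw [norm_indicator_eq_indicator_norm]
  by_cases hjs : j ∈ s <;> simp [hjs]

theorem memL2S_single {j₀ : ℤ} (hj₀ : j₀ ∈ S) : MemL2S S (Pi.single j₀ 1) := by
  refine ⟨memℓp_two_iff.mpr (summable_of_ne_finset_zero (s := {j₀}) fun j hj => ?_),
    fun j hj => ?_⟩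
  · simp [Finset.mem_singleton.not.mp hj]
  · exact Pi.single_eq_of_ne (fun h : j = j₀ => hj (h ▸ hj₀)) _

theorem dotP_single (j₀ : ℤ) : dotP (Pi.single j₀ 1) φ = conj (φ j₀) := by
  rw [dotP, tsum_eq_single j₀ fun j hj => by simp [hj]]
  simp

theorem dotP_indicator_finset (s : Finset ℤ) :
    dotP ((s : Set ℤ).indicator f) φ = ∑ j ∈ s, f j * conj (φ j) := by
  rw [dotP, tsum_eq_sum (s := s) fun j hj => by simp [hj]]
  exact Finset.sum_congr rfl fun j hj => by simp [hj]

theorem summable_dotP (hf : Summable fun j => ‖f j‖ ^ 2) (hφ : Summable fun j => ‖φ j‖ ^ 2) :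
    Summable fun j => f j * conj (φ j) :=
  summable_mul_of_summable_sq hf (summable_sq_conj hφ)

theorem normSq2_indicator (s : Set ℤ) :
    normSq2 (s.indicator f) = ∑' j : s, ‖f j‖ ^ 2 := by
  rw [normSq2, tsum_subtype s fun j => ‖f j‖ ^ 2]
  congr 1; ext j
  by_cases hjs : j ∈ s <;> simp [hjs]

theorem normSq2_indicator_le (hf : Summable fun j => ‖f j‖ ^ 2) (s : Set ℤ) :
    normSq2 (s.indicator f) ≤ normSq2 f := by
  rw [normSq2_indicator]
  exact Summable.tsum_subtype_le (fun j => ‖f j‖ ^ 2) s (fun _ => by positivity) hf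

theorem dotP_add_left {f₁ f₂ φ : ℤ → ℂ} (hf₁ : Summable fun j => ‖f₁ j‖ ^ 2)
    (hf₂ : Summable fun j => ‖f₂ j‖ ^ 2) (hφ : Summable fun j => ‖φ j‖ ^ 2) :
    dotP (f₁ + f₂) φ = dotP f₁ φ + dotP f₂ φ := by
  simp only [dotP, Pi.add_apply, add_mul]
  exact (summable_dotP hf₁ hφ).tsum_add (summable_dotP hf₂ hφ)

end L2

section Reconstruction

variable {ι : Type*} {S : Set ℤ} {F H : ι → ℤ → ℂ} {f : ℤ → ℂ}

theorem summable_sq_dotP_indicator_finset (hcol : ∀ j, Summable fun i => ‖F i j‖ ^ 2)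
    (s : Finset ℤ) :
    Summable fun i => ‖dotP ((s : Set ℤ).indicator f) (F i)‖ ^ 2 := by
  simp_rw [dotP_indicator_finset]
  exact memℓp_two_iff.mp <| Memℓp.finsetSum s fun j _ =>
    (memℓp_two_iff.mpr (summable_sq_conj (hcol j))).const_mul (f j)

/-- The Bessel bound is stated with `tsum`, which is `0` on non-summable families; summability
follows by truncating `f` to finite sets, where it is automatic. -/
theorem IsBesselOn.summable_sq_dotP (hF : IsBesselOn S F)
    (hrow : ∀ i, Summable fun j => ‖F i j‖ ^ 2) (hcol : ∀ j, Summable fun i => ‖F i j‖ ^ 2)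
    (hf : MemL2S S f) : Summable fun i => ‖dotP f (F i)‖ ^ 2 := by
  obtain ⟨B, hB0, hB⟩ := hF
  refine summable_of_sum_le (c := B * normSq2 f) (fun i => by positivity) fun t => ?_
  have hlim : Tendsto (fun s : Finset ℤ => ∑ i ∈ t, ‖dotP ((s : Set ℤ).indicator f) (F i)‖ ^ 2)
      atTop (𝓝 (∑ i ∈ t, ‖dotP f (F i)‖ ^ 2)) := by
    refine tendsto_finsetSum t fun i _ => (Tendsto.norm ?_).pow 2
    simp_rw [dotP_indicator_finset]
    exact (summable_dotP hf.summable_sq (hrow i)).hasSum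
  refine le_of_tendsto hlim (Eventually.of_forall fun s => ?_)
  calc ∑ i ∈ t, ‖dotP ((s : Set ℤ).indicator f) (F i)‖ ^ 2
      ≤ ∑' i, ‖dotP ((s : Set ℤ).indicator f) (F i)‖ ^ 2 :=
        (summable_sq_dotP_indicator_finset hcol s).sum_le_tsum t fun i _ => by positivity
    _ ≤ B * normSq2 ((s : Set ℤ).indicator f) := hB _ (hf.indicator s)
    _ ≤ B * normSq2 f := by gcongr; exact normSq2_indicator_le hf.summable_sq s

noncomputable def mixedFrameOp (F H : ι → ℤ → ℂ) (f : ℤ → ℂ) (j : ℤ) : ℂ :=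
  ∑' i, dotP f (F i) * H i j

theorem mixedFrameOp_add {f₁ f₂ : ℤ → ℂ} {j : ℤ} (hrow : ∀ i, Summable fun j => ‖F i j‖ ^ 2)
    (hf₁ : Summable fun j => ‖f₁ j‖ ^ 2) (hf₂ : Summable fun j => ‖f₂ j‖ ^ 2)
    (h₁ : Summable fun i => dotP f₁ (F i) * H i j) (h₂ : Summable fun i => dotP f₂ (F i) * H i j) :
    mixedFrameOp F H (f₁ + f₂) j = mixedFrameOp F H f₁ j + mixedFrameOp F H f₂ j := by
  simp only [mixedFrameOp, dotP_add_left hf₁ hf₂ (hrow _), add_mul]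
  exact h₁.tsum_add h₂

theorem norm_mixedFrameOp_le {B : ℝ} {j : ℤ}
    (hB : ∀ f : ℤ → ℂ, MemL2S S f → ∑' i, ‖dotP f (F i)‖ ^ 2 ≤ B * normSq2 f)
    (hf : MemL2S S f) (hsum : Summable fun i => ‖dotP f (F i)‖ ^ 2)
    (hH : Summable fun i => ‖H i j‖ ^ 2) :
    ‖mixedFrameOp F H f j‖ ≤ √(B * normSq2 f) * √(∑' i, ‖H i j‖ ^ 2) :=
  (summable_mul_and_norm_tsum_mul_le hsum hH).2.trans <| by gcongr; exact hB f hf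

theorem mixedFrameOp_indicator_finset {j : ℤ} (hcol : ∀ j, Summable fun i => ‖F i j‖ ^ 2)
    (hH : Summable fun i => ‖H i j‖ ^ 2)
    (hK : ∀ j₀ ∈ S, ∑' i, conj (F i j₀) * H i j = (Pi.single j₀ 1 : ℤ → ℂ) j)
    (hf : ∀ j ∉ S, f j = 0) (s : Finset ℤ) :
    mixedFrameOp F H ((s : Set ℤ).indicator f) j = (s : Set ℤ).indicator f j := by
  have hterm : ∀ j₀, ∑' i, f j₀ * conj (F i j₀) * H i j = (Pi.single j₀ (f j₀) : ℤ → ℂ) j := by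
    intro j₀
    by_cases hj₀ : j₀ ∈ S
    · simp_rw [mul_assoc, tsum_mul_left, hK j₀ hj₀, Pi.single_apply, mul_ite, mul_one, mul_zero]
    · simp [hf j₀ hj₀]
  simp_rw [mixedFrameOp, dotP_indicator_finset, Finset.sum_mul]
  rw [Summable.tsum_finsetSum fun j₀ _ => ?_]
  · simp_rw [hterm, Finset.sum_pi_single, Set.indicator_apply, Finset.mem_coe]
  · simp_rw [mul_assoc]
    exact (summable_mul_of_summable_sq (summable_sq_conj (hcol j₀)) hH).mul_left (f j₀)

theorem mixedFrameOp_eq_self_of_kernel (hF : IsBesselOn S F)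
    (hrow : ∀ i, Summable fun j => ‖F i j‖ ^ 2) (hcol : ∀ j, Summable fun i => ‖F i j‖ ^ 2)
    (hH : ∀ j, Summable fun i => ‖H i j‖ ^ 2)
    (hK : ∀ j₀ ∈ S, ∀ j, ∑' i, conj (F i j₀) * H i j = (Pi.single j₀ 1 : ℤ → ℂ) j)
    (hf : MemL2S S f) (j : ℤ) : mixedFrameOp F H f j = f j := by
  obtain ⟨B, -, hB⟩ := id hF
  set tail : Finset ℤ → ℤ → ℂ := fun s => ((s : Set ℤ)ᶜ).indicator f
  have hsum {u : ℤ → ℂ} (hu : MemL2S S u) : Summable fun i => dotP u (F i) * H i j :=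
    summable_mul_of_summable_sq (hF.summable_sq_dotP hrow hcol hu) (hH j)
  have hsplit (s : Finset ℤ) :
      (s : Set ℤ).indicator f j = mixedFrameOp F H f j - mixedFrameOp F H (tail s) j := by
    rw [← mixedFrameOp_indicator_finset hcol (hH j) (hK · · j) hf.2 s, eq_sub_iff_add_eq,
      ← mixedFrameOp_add hrow (hf.indicator _).summable_sq (hf.indicator _).summable_sq
        (hsum (hf.indicator _)) (hsum (hf.indicator _)), Set.indicator_self_add_compl]
  have htail : Tendsto (fun s => mixedFrameOp F H (tail s) j) atTop (𝓝 0) := by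
    refine squeeze_zero_norm (fun s => norm_mixedFrameOp_le hB (hf.indicator _)
      (hF.summable_sq_dotP hrow hcol (hf.indicator _)) (hH j)) ?_
    have := (((tendsto_tsum_compl_atTop_zero fun j => ‖f j‖ ^ 2).const_mul B).sqrt.mul_const
      √(∑' i, ‖H i j‖ ^ 2))
    rw [mul_zero, Real.sqrt_zero, zero_mul] at this
    exact this.congr fun s => by rw [normSq2_indicator]; rfl
  have hlim : Tendsto (fun s : Finset ℤ => (s : Set ℤ).indicator f j) atTop
      (𝓝 (mixedFrameOp F H f j)) := by
    simpa only [hsplit, sub_zero] using tendsto_const_nhds.sub htail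
  have hev : ∀ᶠ s : Finset ℤ in atTop, (s : Set ℤ).indicator f j = f j :=
    (eventually_ge_atTop {j}).mono fun s hs =>
      Set.indicator_of_mem (Finset.singleton_subset_iff.mp hs) f
  exact tendsto_nhds_unique hlim (tendsto_const_nhds.congr' (EventuallyEq.symm hev))

theorem forall_eq_mixedFrameOp_iff (hF : IsBesselOn S F)
    (hrow : ∀ i, Summable fun j => ‖F i j‖ ^ 2) (hcol : ∀ j, Summable fun i => ‖F i j‖ ^ 2)
    (hH : ∀ j, Summable fun i => ‖H i j‖ ^ 2) :
    (∀ f : ℤ → ℂ, MemL2S S f → ∀ j, f j = mixedFrameOp F H f j) ↔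
      ∀ j₀ ∈ S, ∀ j, ∑' i, conj (F i j₀) * H i j = (Pi.single j₀ 1 : ℤ → ℂ) j := by
  refine ⟨fun h j₀ hj₀ j => ?_,
    fun hK f hf j => (mixedFrameOp_eq_self_of_kernel hF hrow hcol hH hK hf j).symm⟩
  simpa only [mixedFrameOp, dotP_single] using (h _ (memL2S_single hj₀) j).symm

end Reconstruction

section Periodic

variable {N : ℕ} {S : Set ℤ}

theorem IsPeriodicSet.sub_mul_mem_iff (hS : IsPeriodicSet N S) (j n : ℤ) :
    j - n * N ∈ S ↔ j ∈ S :=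
  ⟨fun h => by simpa using hS.2 _ h n, fun h => by simpa [sub_eq_add_neg] using hS.2 _ h (-n)⟩

theorem IsPeriodicSet.forall_mem_inter_Ico_iff (hS : IsPeriodicSet N S) (hN : N ≠ 0)
    {P : ℤ → Prop} (hP : ∀ j r : ℤ, P j → P (j + r * N)) :
    (∀ j ∈ S ∩ Set.Ico 0 (N : ℤ), P j) ↔ ∀ j ∈ S, P j := by
  refine ⟨fun h j hj => ?_, fun h j hj => h j hj.1⟩
  rw [← Int.emod_add_ediv_mul j N]
  refine hP _ _ (h _ ⟨?_, Int.emod_nonneg j (by omega), Int.emod_lt_of_pos j (by omega)⟩)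
  simpa [Int.emod_def, sub_eq_add_neg, mul_comm] using hS.2 j hj (-(j / N))

variable {M : ℕ} {φ ψ : ℤ → ℂ}

theorem matEntry_add_mul (j k r : ℤ) :
    matEntry M N φ ψ (j + r * N) k = matEntry M N φ ψ j k := by
  rw [matEntry, ← (Equiv.addRight r).tsum_eq]
  refine tsum_congr fun n => ?_
  rw [Equiv.coe_addRight, show j + r * N - (n + r) * N = j - n * N by ring,
    show j + r * N + k * M - (n + r) * N = j + k * M - n * N by ring]

theorem matEntry_eq_zero_of_left_notMem (hS : IsPeriodicSet N S) (hφ : ∀ t ∉ S, φ t = 0)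
    {j : ℤ} (k : ℤ) (hj : j ∉ S) : matEntry M N φ ψ j k = 0 := by
  simp [matEntry, hφ _ (mt (hS.sub_mul_mem_iff j _).mp hj)]

theorem matEntry_eq_zero_of_right_notMem (hS : IsPeriodicSet N S) (hψ : ∀ t ∉ S, ψ t = 0)
    {j k : ℤ} (hj : j + k * M ∉ S) : matEntry M N φ ψ j k = 0 := by
  simp [matEntry, hψ _ (mt (hS.sub_mul_mem_iff (j + k * M) _).mp hj)]

end Periodic

section Gabor

open scoped Real

variable {L M N : ℕ}

theorem sum_exp_two_pi_I_mul_div (hM : M ≠ 0) (d : ℤ) :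
    ∑ m : Fin M, exp (2 * π * I * ((m : ℕ) : ℂ) * d / M) = if (M : ℤ) ∣ d then (M : ℂ) else 0 := by
  set ζ := exp (2 * π * I / M)
  have hζ : IsPrimitiveRoot ζ M := isPrimitiveRoot_exp M hM
  have hterm (m : ℕ) : exp (2 * π * I * (m : ℂ) * d / M) = (ζ ^ d) ^ m := by
    rw [← zpow_natCast, ← zpow_mul, ← exp_int_mul]
    congr 1
    push_cast
    ring
  rw [Fin.sum_univ_eq_sum_range (fun m => exp (2 * π * I * (m : ℂ) * d / M)) M]
  simp_rw [hterm]
  split_ifs with hd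
  · simp [(hζ.zpow_eq_one_iff_dvd d).mpr hd]
  · rw [geom_sum_eq ((hζ.zpow_eq_one_iff_dvd d).not.mpr hd), ← zpow_natCast, ← zpow_mul,
      mul_comm d, zpow_mul, zpow_natCast, hζ.pow_eq_one, one_zpow, sub_self, zero_div]

theorem norm_gaborFam_apply (g : ℕ → ℤ → ℂ) (i : Fin L × ℤ × Fin M) (j : ℤ) :
    ‖gaborFam L M N g i j‖ = ‖g i.1 (j - i.2.1 * N)‖ := by
  have hexp : 2 * (π : ℂ) * I * ((i.2.2 : ℕ) : ℂ) * j / M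
      = ((2 * π * (i.2.2 : ℕ) * j / M : ℝ) : ℂ) * I := by
    push_cast
    ring
  rw [gaborFam, norm_mul, hexp, norm_exp_ofReal_mul_I, one_mul]

theorem conj_gaborFam_mul_gaborFam (g h : ℕ → ℤ → ℂ) (i : Fin L × ℤ × Fin M) (j j₀ : ℤ) :
    conj (gaborFam L M N g i j₀) * gaborFam L M N h i j
      = exp (2 * π * I * ((i.2.2 : ℕ) : ℂ) * ((j - j₀ : ℤ) : ℂ) / M)
        * (h i.1 (j - i.2.1 * N) * conj (g i.1 (j₀ - i.2.1 * N))) := by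
  have hexp : conj (exp (2 * π * I * ((i.2.2 : ℕ) : ℂ) * j₀ / M))
      * exp (2 * π * I * ((i.2.2 : ℕ) : ℂ) * j / M)
      = exp (2 * π * I * ((i.2.2 : ℕ) : ℂ) * ((j - j₀ : ℤ) : ℂ) / M) := by
    rw [← exp_conj, ← exp_add]
    congr 1
    simp only [map_div₀, map_mul, conj_I, conj_ofReal, map_ofNat, map_natCast, map_intCast]
    push_cast
    ring
  rw [gaborFam, gaborFam, map_mul, ← hexp]
  ring

theorem summable_sq_gaborFam_row {g : ℕ → ℤ → ℂ} (hg : ∀ l, Summable fun t => ‖g l t‖ ^ 2)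
    (i : Fin L × ℤ × Fin M) : Summable fun j => ‖gaborFam L M N g i j‖ ^ 2 := by
  simp_rw [norm_gaborFam_apply]
  exact (hg i.1).comp_injective sub_left_injective

theorem summable_sq_gaborFam_col (hN : N ≠ 0) {g : ℕ → ℤ → ℂ}
    (hg : ∀ l, Summable fun t => ‖g l t‖ ^ 2) (j : ℤ) :
    Summable fun i : Fin L × ℤ × Fin M => ‖gaborFam L M N g i j‖ ^ 2 := by
  simp_rw [norm_gaborFam_apply]
  have hshift (l : ℕ) : Summable fun n : ℤ => ‖g l (j - n * N)‖ ^ 2 :=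
    (hg l).comp_injective fun a b hab => by simpa [hN] using hab
  rw [summable_prod_of_nonneg fun _ => by positivity]
  refine ⟨fun l => ?_, .of_finite⟩
  rw [summable_prod_of_nonneg fun _ => by positivity]
  refine ⟨fun _ => .of_finite, ?_⟩
  simpa using (hshift l).mul_left (M : ℝ)

theorem tsum_conj_gaborFam_mul_gaborFam (hM : M ≠ 0) (hN : N ≠ 0) {g h : ℕ → ℤ → ℂ}
    (hg : ∀ l, Summable fun t => ‖g l t‖ ^ 2) (hh : ∀ l, Summable fun t => ‖h l t‖ ^ 2)
    (j j₀ : ℤ) :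
    ∑' i : Fin L × ℤ × Fin M, conj (gaborFam L M N g i j₀) * gaborFam L M N h i j
      = (if (M : ℤ) ∣ (j - j₀) then (M : ℂ) else 0) *
        ∑ l ∈ Finset.range L, ∑' n : ℤ, h l (j - n * N) * conj (g l (j₀ - n * N)) := by
  have hsum : Summable fun i : Fin L × ℤ × Fin M =>
      conj (gaborFam L M N g i j₀) * gaborFam L M N h i j :=
    summable_mul_of_summable_sq (summable_sq_conj (summable_sq_gaborFam_col hN hg j₀))
      (summable_sq_gaborFam_col hN hh j)
  rw [hsum.tsum_prod' hsum.prod_factor, tsum_fintype, ← Fin.sum_univ_eq_sum_range _ L,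
    Finset.mul_sum]
  refine Finset.sum_congr rfl fun l _ => ?_
  have hsuml := hsum.prod_factor l
  rw [hsuml.tsum_prod' hsuml.prod_factor, ← tsum_mul_left]
  refine tsum_congr fun n => ?_
  simp_rw [tsum_fintype, conj_gaborFam_mul_gaborFam, ← Finset.sum_mul,
    sum_exp_two_pi_I_mul_div hM]

theorem forall_kernel_eq_single_iff (hM : M ≠ 0) {S : Set ℤ} (hS : IsPeriodicSet N S)
    {g h : ℕ → ℤ → ℂ} (hg : ∀ l, ∀ t ∉ S, g l t = 0) (hh : ∀ l, ∀ t ∉ S, h l t = 0) :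
    (∀ j₀ ∈ S, ∀ j : ℤ, (if (M : ℤ) ∣ (j - j₀) then (M : ℂ) else 0) *
        ∑ l ∈ Finset.range L, ∑' n : ℤ, h l (j - n * N) * conj (g l (j₀ - n * N))
          = (Pi.single j₀ 1 : ℤ → ℂ) j) ↔
      ∀ j ∈ S, ∀ k : ℤ,
        ∑ l ∈ Finset.range L, matEntry M N (h l) (g l) j k = if k = 0 then 1 / (M : ℂ) else 0 := by
  have hM' : (M : ℂ) ≠ 0 := Nat.cast_ne_zero.mpr hM
  have hkernel (j k : ℤ) : (if (M : ℤ) ∣ (j - (j + k * M)) then (M : ℂ) else 0) *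
      ∑ l ∈ Finset.range L, ∑' n : ℤ, h l (j - n * N) * conj (g l (j + k * M - n * N))
        = M * ∑ l ∈ Finset.range L, matEntry M N (h l) (g l) j k := by
    rw [if_pos ⟨-k, by ring⟩]
    rfl
  have hsingle (j k : ℤ) : (Pi.single (j + k * M) 1 : ℤ → ℂ) j = if k = 0 then 1 else 0 := by
    simp [Pi.single_apply, hM]
  constructor
  · intro hK j hj k
    by_cases hjk : j + k * M ∈ S
    · have := hK _ hjk j
      rw [hkernel, hsingle] at this
      split_ifs at this ⊢
      · rw [eq_div_iff hM', mul_comm, this]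
      · simpa [hM'] using this
    · have hk : k ≠ 0 := by rintro rfl; simp_all
      rw [if_neg hk]
      exact Finset.sum_eq_zero fun l _ => matEntry_eq_zero_of_right_notMem hS (hg l) hjk
  · intro hW j₀ hj₀ j
    by_cases hdvd : (M : ℤ) ∣ (j - j₀)
    · obtain ⟨c, hc⟩ := hdvd
      obtain ⟨k, rfl⟩ : ∃ k : ℤ, j₀ = j + k * M := ⟨-c, by linarith⟩
      rw [hkernel, hsingle]
      by_cases hj : j ∈ S
      · rw [hW j hj k]
        split_ifs
        · field_simp
        · rw [mul_zero]
      · have hk : k ≠ 0 := by rintro rfl; simp_all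
        rw [Finset.sum_eq_zero fun l _ => matEntry_eq_zero_of_left_notMem hS (hh l) k hj,
          if_neg hk, mul_zero]
    · rw [if_neg hdvd, zero_mul, Pi.single_eq_of_ne]
      rintro rfl
      exact hdvd (by simp)

end Gabor

theorem stmt10_general (L M N : ℕ) (hM : 0 < M) (hN : 0 < N)
    (S : Set ℤ) (hS : IsPeriodicSet N S)
    (g h : ℕ → ℤ → ℂ) (hg : ∀ l, MemL2S S (g l)) (hh : ∀ l, MemL2S S (h l))
    (hBg : IsBesselOn S (gaborFam L M N g)) :
    (∀ f : ℤ → ℂ, MemL2S S f → ∀ j : ℤ,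
        f j = ∑' i : Fin L × ℤ × Fin M,
          dotP f (gaborFam L M N g i) * gaborFam L M N h i j) ↔
      ((∀ j ∈ S ∩ Set.Ico (0 : ℤ) (N : ℤ),
          ∑ l ∈ Finset.range L, matEntry M N (h l) (g l) j 0 = 1 / (M : ℂ)) ∧
       (∀ j ∈ S ∩ Set.Ico (0 : ℤ) (N : ℤ), ∀ k : ℤ, k ≠ 0 →
          ∑ l ∈ Finset.range L, matEntry M N (h l) (g l) j k = 0)) := by
  have hg2 (l : ℕ) := (hg l).summable_sq
  have hh2 (l : ℕ) := (hh l).summable_sq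
  refine (forall_eq_mixedFrameOp_iff hBg (summable_sq_gaborFam_row hg2)
    (summable_sq_gaborFam_col hN.ne' hg2) (summable_sq_gaborFam_col hN.ne' hh2)).trans ?_
  simp_rw [tsum_conj_gaborFam_mul_gaborFam hM.ne' hN.ne' hg2 hh2]
  rw [forall_kernel_eq_single_iff hM.ne' hS (fun l => (hg l).2) (fun l => (hh l).2),
    ← hS.forall_mem_inter_Ico_iff hN.ne' fun j r hj k => by
      simpa only [matEntry_add_mul] using hj k]
  refine ⟨fun hW => ⟨fun j hj => by simpa using hW j hj 0,
    fun j hj k hk => by simpa [hk] using hW j hj k⟩, fun ⟨h₀, hk⟩ j hj k => ?_⟩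
  split_ifs with hk₀
  · exact hk₀ ▸ h₀ j hj
  · exact hk j hj k hk₀

theorem stmt10 (L M N : ℕ) (hL : 0 < L) (hM : 0 < M) (hN : 0 < N)
    (S : Set ℤ) (hS : IsPeriodicSet N S)
    (g h : ℕ → ℤ → ℂ) (hg : ∀ l, MemL2S S (g l)) (hh : ∀ l, MemL2S S (h l))
    (hBg : IsBesselOn S (gaborFam L M N g)) (hBh : IsBesselOn S (gaborFam L M N h)) :
    (∀ f : ℤ → ℂ, MemL2S S f → ∀ j : ℤ,
        f j = ∑' i : Fin L × ℤ × Fin M,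
          dotP f (gaborFam L M N g i) * gaborFam L M N h i j) ↔
      ((∀ j ∈ S ∩ Set.Ico (0 : ℤ) (N : ℤ),
          ∑ l ∈ Finset.range L, matEntry M N (h l) (g l) j 0 = 1 / (M : ℂ)) ∧
       (∀ j ∈ S ∩ Set.Ico (0 : ℤ) (N : ℤ), ∀ k : ℤ, k ≠ 0 →
          ∑ l ∈ Finset.range L, matEntry M N (h l) (g l) j k = 0)) :=
  stmt10_general L M N hM hN S hS g h hg hh hBg
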